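/- arXiv:2602.18373 — 4 statements merged into one kernel-verified Lean document; each statement's English description precedes it below -/
import Mathlib

section
/- Let (M,g) be a Riemannian manifold with Lorentz force F. Let K_i ∈ Γ(Sym^i TM) for i = 0,…,l, with associated polynomial functions φ_i(v) = K_i(v,…,v)/i! on TM, and set φ = Σ_{i=0}^l φ_i. Then φ is constant along γ' for every magnetic geodesic γ (i.e., φ is a first integral of the magnetic flow) if and only if d^s K_i = F_* K_{i+1} for all i = 0,…,l, where K_{l+1} := 0. -/
open RealInnerProductSpace

lemma shift_sum (l : ℕ) (g f : ℕ → ℝ) (hf0 : f 0 = 0)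
    (hfs : ∀ m, f (m + 1) = g m) (hgl : g l = 0) :
    ∑ k ∈ Finset.range (l + 1), f k = ∑ k ∈ Finset.range (l + 1), g k := by
  rw [Finset.sum_range_succ' f l, Finset.sum_range_succ g l, hf0, hgl]
  simp [hfs]

lemma partial_diffAt {E : Type*} [NormedAddCommGroup E] [NormedSpace ℝ E]
    {i : ℕ} (K : E → MultilinearMap ℝ (fun _ : Fin i => E) ℝ)
    (hsm : ContDiff ℝ (⊤ : ℕ∞) fun pv : E × E => K pv.1 fun _ => pv.2) (p v : E) :
    DifferentiableAt ℝ (fun q => K q fun _ => v) p := by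
  have h := (hsm.differentiable (by simp)).differentiableAt (x := (p, v))
  have hf : DifferentiableAt ℝ (fun q : E => (q, v)) p :=
    ((hasFDerivAt_id p).prodMk (hasFDerivAt_const v p)).differentiableAt
  exact h.comp p hf

lemma multilinear_continuous {E : Type*} [NormedAddCommGroup E] [NormedSpace ℝ E]
    [FiniteDimensional ℝ E] {i : ℕ} (T : MultilinearMap ℝ (fun _ : Fin i => E) ℝ) :
    Continuous fun w : Fin i → E => T w := by
  classical
  set n := Module.finrank ℝ E
  let b : Module.Basis (Fin n) ℝ E := Module.finBasis ℝ E
  have hrepr : ∀ w : Fin i → E, T w = ∑ r : Fin i → Fin n,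
      (∏ j, b.repr (w j) (r j)) • T (fun j => b (r j)) := by
    intro w
    have h1 : (T fun j => ∑ k : Fin n, b.repr (w j) k • b k)
        = ∑ r : (Fin i → Fin n), T fun j => b.repr (w j) (r j) • b (r j) :=
      T.map_sum (g := fun j k => b.repr (w j) k • b k)
    have h2 : (fun j => ∑ k : Fin n, b.repr (w j) k • b k) = w := by
      funext j; exact b.sum_repr (w j)
    rw [h2] at h1
    rw [h1]
    congr 1; funext r
    rw [T.map_smul_univ]
  have : (fun w : Fin i → E => T w) = fun w => ∑ r : Fin i → Fin n,
      (∏ j, b.repr (w j) (r j)) • T (fun j => b (r j)) := funext hrepr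
  rw [this]
  refine continuous_finset_sum _ fun r _ => ?_
  refine Continuous.smul (f := fun w : Fin i → E => ∏ j, b.repr (w j) (r j)) ?_ continuous_const
  refine continuous_finset_prod _ fun j _ => ?_
  have h := LinearMap.continuous_of_finiteDimensional
      ((LinearMap.proj (r j) : (Fin n → ℝ) →ₗ[ℝ] ℝ).comp
        (Finsupp.lcoeFun.comp (b.repr.toLinearMap : E →ₗ[ℝ] (Fin n →₀ ℝ))))
  exact (h : Continuous fun q : E => b.repr q (r j)).comp
    (continuous_apply j)

lemma hasDerivAt_diag {E : Type*} [NormedAddCommGroup E] [NormedSpace ℝ E]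
    [FiniteDimensional ℝ E] {i : ℕ} (K : E → MultilinearMap ℝ (fun _ : Fin i => E) ℝ)
    (hsm : ContDiff ℝ (⊤ : ℕ∞) fun pv : E × E => K pv.1 fun _ => pv.2)
    {γ δ : ℝ → E} {t : ℝ} {w : E}
    (hγ : HasDerivAt γ (δ t) t) (hδ : HasDerivAt δ w t) :
    HasDerivAt (fun s => K (γ s) fun _ => δ s)
      (fderiv ℝ (fun q => K q fun _ => δ t) (γ t) (δ t)
        + ∑ j : Fin i, K (γ t) (Function.update (fun _ => δ t) j w)) t := by
  classical
  set p := γ t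
  set v := δ t
  set g : E × E → ℝ := fun pv => K pv.1 fun _ => pv.2 with hg_def
  have hgd : DifferentiableAt ℝ g (p, v) := (hsm.differentiable (by simp)).differentiableAt
  have hg : HasFDerivAt g (fderiv ℝ g (p, v)) (p, v) := hgd.hasFDerivAt
  set L := fderiv ℝ g (p, v)
  have hc : HasDerivAt (fun s => (γ s, δ s)) (v, w) t := hγ.prodMk hδ
  have hmain : HasDerivAt (fun s => g (γ s, δ s)) (L (v, w)) t := by
    have := hg.comp_hasDerivAt t hc; exact this
  -- partial derivative in p
  have h1 : HasFDerivAt (fun q => g (q, v))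
      (L.comp ((ContinuousLinearMap.id ℝ E).prod 0)) p := by
    have : HasFDerivAt (fun q : E => (q, v))
        ((ContinuousLinearMap.id ℝ E).prod 0) p :=
      (hasFDerivAt_id p).prodMk (hasFDerivAt_const v p)
    exact hg.comp p this
  -- partial derivative in v via the multilinear structure
  set T : ContinuousMultilinearMap ℝ (fun _ : Fin i => E) ℝ :=
    { toMultilinearMap := K p, cont := multilinear_continuous (K p) }
  set Δ : E →L[ℝ] (Fin i → E) := ContinuousLinearMap.pi fun _ => ContinuousLinearMap.id ℝ E
  have h2 : HasFDerivAt (fun x => g (p, x))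
      ((T.linearDeriv fun _ => v).comp Δ) v := by
    have hT : HasFDerivAt (fun m : Fin i → E => T m) (T.linearDeriv fun _ => v)
        (fun _ => v) := T.hasFDerivAt _
    exact hT.comp v Δ.hasFDerivAt
  have h2' : HasFDerivAt (fun x => g (p, x))
      (L.comp ((0 : E →L[ℝ] E).prod (ContinuousLinearMap.id ℝ E))) v := by
    have : HasFDerivAt (fun x : E => (p, x))
        ((0 : E →L[ℝ] E).prod (ContinuousLinearMap.id ℝ E)) v :=
      (hasFDerivAt_const p v).prodMk (hasFDerivAt_id v)
    exact hg.comp v this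
  have heq2 := h2.unique h2'
  have hsplit : L (v, w) = L (v, 0) + L (0, w) := by
    rw [← ContinuousLinearMap.map_add]; norm_num
  have hA : L (v, 0) = fderiv ℝ (fun q => K q fun _ => v) p v := by
    have := h1.fderiv
    have : fderiv ℝ (fun q => g (q, v)) p v
        = (L.comp ((ContinuousLinearMap.id ℝ E).prod 0)) v := by rw [this]
    simpa using this.symm
  have hB : L (0, w) = ∑ j : Fin i, K p (Function.update (fun _ => v) j w) := by
    have : ((T.linearDeriv fun _ => v).comp Δ) w
        = (L.comp ((0 : E →L[ℝ] E).prod (ContinuousLinearMap.id ℝ E))) w := by rw [heq2]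
    have h3 : ((T.linearDeriv fun _ => v).comp Δ) w
        = ∑ j : Fin i, K p (Function.update (fun _ => v) j w) := by
      simp only [ContinuousLinearMap.comp_apply, ContinuousMultilinearMap.linearDeriv_apply]
      rfl
    rw [← h3, this]
    simp
  rw [hsplit, hA, hB] at hmain
  exact hmain

open NormedSpace in
lemma exists_magnetic_geodesic {E : Type*} [NormedAddCommGroup E] [NormedSpace ℝ E]
    [FiniteDimensional ℝ E] (F : E →ₗ[ℝ] E) (p v : E) :
    ∃ γ : ℝ → E, Differentiable ℝ γ ∧
      (∀ t : ℝ, HasDerivAt (deriv γ) (F (deriv γ t)) t) ∧ γ 0 = p ∧ deriv γ 0 = v := by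
  have : CompleteSpace E := FiniteDimensional.complete ℝ E
  set F' : E →L[ℝ] E := LinearMap.toContinuousLinearMap F with hF'
  set c : ℝ → E := fun s => (exp (s • F')) v with hc_def
  have hc : ∀ s : ℝ, HasDerivAt c (F' (c s)) s := by
    intro s
    have h := hasDerivAt_exp_smul_const' (𝕂 := ℝ) F' s
    have h2 := h.clm_apply (hasDerivAt_const s v)
    simpa using h2
  have ccont : Continuous c := Differentiable.continuous fun s => (hc s).differentiableAt
  set γ : ℝ → E := fun t => p + ∫ s in (0:ℝ)..t, c s with hγ_def
  have hγd : ∀ t : ℝ, HasDerivAt γ (c t) t := by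
    intro t
    have hint : IntervalIntegrable c MeasureTheory.volume 0 t :=
      ccont.intervalIntegrable 0 t
    have h := intervalIntegral.integral_hasDerivAt_right hint
      (ccont.stronglyMeasurableAtFilter _ _) ccont.continuousAt
    simpa [γ] using h
  have hderiv : deriv γ = c := funext fun t => (hγd t).deriv
  refine ⟨γ, fun t => (hγd t).differentiableAt, ?_, ?_, ?_⟩
  · intro t
    rw [hderiv]
    have := hc t
    simpa [F'] using this
  · simp [γ]
  · rw [hderiv]
    simp [c]

-- symmetry: every update-term equals the cons-term
lemma update_eq_cons {E : Type*} [NormedAddCommGroup E] [NormedSpace ℝ E] {m : ℕ}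
    (T : MultilinearMap ℝ (fun _ : Fin (m+1) => E) ℝ)
    (hsym : ∀ (σ : Equiv.Perm (Fin (m+1))) (w : Fin (m+1) → E), T (w ∘ σ) = T w)
    (v b : E) (j : Fin (m+1)) :
    T (Function.update (fun _ => v) j b) = T (Fin.cons b (fun _ => v)) := by
  classical
  have h0 : (Fin.cons b (fun _ => v) : Fin (m+1) → E)
      = Function.update (fun _ => v) 0 b := by
    funext k
    refine Fin.cases ?_ (fun k => ?_) k
    · simp
    · simp [Function.update_apply, Fin.succ_ne_zero]
  rw [h0]
  have hcomp : (Function.update (fun _ => v) j b) ∘ (Equiv.swap j 0)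
      = Function.update (fun _ => v) 0 b := by
    have := Function.update_comp_equiv (fun _ : Fin (m+1) => v) (Equiv.swap j 0) j b
    simpa [Equiv.swap_apply_left, Function.comp_def] using this
  rw [← hcomp, hsym]

-- polynomial coefficient extraction
lemma coeff_zero_of_sum_eq_zero (n : ℕ) (c : ℕ → ℝ)
    (h : ∀ x : ℝ, ∑ i ∈ Finset.range n, c i * x ^ (i + 1) = 0) :
    ∀ i ∈ Finset.range n, c i = 0 := by
  classical
  set P : Polynomial ℝ := ∑ i ∈ Finset.range n, Polynomial.C (c i) * Polynomial.X ^ (i + 1)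
    with hP
  have heval : ∀ x : ℝ, P.eval x = ∑ i ∈ Finset.range n, c i * x ^ (i + 1) := by
    intro x
    simp [P, Polynomial.eval_finset_sum]
  have hP0 : P = 0 := by
    apply Polynomial.funext
    intro x
    simp [heval x, h x]
  intro i hi
  have hco : P.coeff (i + 1) = c i := by
    rw [hP, Polynomial.finset_sum_coeff]
    rw [Finset.sum_eq_single i]
    · simp
    · intro k hk hki
      simp [Polynomial.coeff_C_mul, Polynomial.coeff_X_pow, hki, Nat.succ_inj]
      intro hc'; exact absurd hc'.symm hki
    · intro hnot; exact absurd hi hnot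
  rw [hP0] at hco
  simpa using hco.symm

lemma shift_sum' (l : ℕ) (g f : ℕ → ℝ) (hf0 : f 0 = 0)
    (hfs : ∀ m, f (m + 1) = g m) (hgl : g l = 0) :
    ∑ k ∈ Finset.range (l + 1), f k = ∑ k ∈ Finset.range (l + 1), g k := by
  rw [Finset.sum_range_succ' f l, Finset.sum_range_succ g l, hf0, hgl]
  simp [hfs]

lemma fact_id (m : ℕ) : (1 / ((m+1).factorial : ℝ)) * ((m : ℝ) + 1) = 1 / (m.factorial : ℝ) := by
  have h : ((m+1).factorial : ℝ) = ((m:ℝ)+1) * (m.factorial : ℝ) := by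
    rw [Nat.factorial_succ]; push_cast; ring
  have h1 : ((m:ℝ)+1) ≠ 0 := by positivity
  have h2 : (m.factorial : ℝ) ≠ 0 := by positivity
  rw [h]; field_simp

lemma algebra_zero (l : ℕ) (a b B : ℕ → ℝ) (hB0 : B 0 = 0)
    (hBs : ∀ m, B (m + 1) = ((m : ℝ) + 1) * b m) (hbl : b l = 0)
    (hab : ∀ k ∈ Finset.range (l + 1), a k = -b k) :
    ∑ k ∈ Finset.range (l + 1), (1 / (k.factorial : ℝ)) * (a k + B k) = 0 := by
  have h1 : ∑ k ∈ Finset.range (l + 1), (1 / (k.factorial : ℝ)) * (a k + B k)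
      = ∑ k ∈ Finset.range (l + 1), (1 / (k.factorial : ℝ)) * a k
        + ∑ k ∈ Finset.range (l + 1), (1 / (k.factorial : ℝ)) * B k := by
    rw [← Finset.sum_add_distrib]
    exact Finset.sum_congr rfl fun k _ => by ring
  have h2 : ∑ k ∈ Finset.range (l + 1), (1 / (k.factorial : ℝ)) * B k
      = ∑ k ∈ Finset.range (l + 1), (1 / (k.factorial : ℝ)) * b k := by
    refine shift_sum' l _ _ (by simp [hB0]) (fun m => ?_) (by simp [hbl])
    rw [hBs m, ← mul_assoc, fact_id m]
  have h3 : ∑ k ∈ Finset.range (l + 1), (1 / (k.factorial : ℝ)) * a k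
      = -∑ k ∈ Finset.range (l + 1), (1 / (k.factorial : ℝ)) * b k := by
    rw [← Finset.sum_neg_distrib]
    exact Finset.sum_congr rfl fun k hk => by rw [hab k hk]; ring
  rw [h1, h2, h3]; ring

lemma algebra_poly (l : ℕ) (a b B : ℕ → ℝ) (x : ℝ) (hB0 : B 0 = 0)
    (hBs : ∀ m, B (m + 1) = ((m : ℝ) + 1) * b m) (hbl : b l = 0) :
    ∑ k ∈ Finset.range (l + 1), (1 / (k.factorial : ℝ)) * (x ^ (k+1) * a k + x ^ k * B k)
      = ∑ k ∈ Finset.range (l + 1), ((1 / (k.factorial : ℝ)) * (a k + b k)) * x ^ (k+1) := by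
  have h1 : ∑ k ∈ Finset.range (l + 1), (1 / (k.factorial : ℝ)) * (x ^ (k+1) * a k + x ^ k * B k)
      = ∑ k ∈ Finset.range (l + 1), (1 / (k.factorial : ℝ)) * a k * x ^ (k+1)
        + ∑ k ∈ Finset.range (l + 1), (1 / (k.factorial : ℝ)) * B k * x ^ k := by
    rw [← Finset.sum_add_distrib]
    exact Finset.sum_congr rfl fun k _ => by ring
  have h2 : ∑ k ∈ Finset.range (l + 1), (1 / (k.factorial : ℝ)) * B k * x ^ k
      = ∑ k ∈ Finset.range (l + 1), (1 / (k.factorial : ℝ)) * b k * x ^ (k+1) := by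
    refine shift_sum' l _ _ (by simp [hB0]) (fun m => ?_) (by simp [hbl])
    rw [hBs m, ← mul_assoc, fact_id m]
  rw [h1, h2, ← Finset.sum_add_distrib]
  exact Finset.sum_congr rfl fun k _ => by ring

/-- Proposition 2.1: for symmetric tensors `K_i ∈ Γ(Sym^i TM)` (`i = 0,…,l`)
with associated polynomial functions `φ_i(p,v) = K_i(v,…,v)/i!` and `φ = Σ φ_i`, the function
`φ` is a first integral of the magnetic flow of the Lorentz force `F` if and only if
`d^s K_i = F_* K_{i+1}` for all `i = 0,…,l` (with `K_{l+1} = 0`).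

Formalized in the flat model `M = E`: a magnetic geodesic satisfies `(γ')' = F(γ')`,
the symmetric differential satisfies `(d^s K_i)(v,…,v) = (i+1)(∇_v K_i)(v,…,v)` with
`∇` the ordinary derivative in `p`, and `(F_* K_{i+1})(v,…,v) = -(i+1) K_{i+1}(Fv,v,…,v)`;
two symmetric tensors coincide iff they coincide on the diagonal. -/
theorem first_integral_iff_magnetic_killing
    {E : Type*} [NormedAddCommGroup E] [InnerProductSpace ℝ E] [FiniteDimensional ℝ E]
    (l : ℕ) (F : E →ₗ[ℝ] E) (hF : ∀ x y : E, ⟪F x, y⟫ = -⟪x, F y⟫)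
    (K : (i : ℕ) → E → MultilinearMap ℝ (fun _ : Fin i => E) ℝ)
    (hKsym : ∀ (i : ℕ) (p : E) (σ : Equiv.Perm (Fin i)) (w : Fin i → E),
      K i p (w ∘ σ) = K i p w)
    (hKsmooth : ∀ i : ℕ, ContDiff ℝ (⊤ : ℕ∞) (fun pv : E × E => K i pv.1 (fun _ => pv.2)))
    (htop : ∀ p : E, K (l + 1) p = 0) :
    (∀ γ : ℝ → E, Differentiable ℝ γ →
        (∀ t : ℝ, HasDerivAt (deriv γ) (F (deriv γ t)) t) →
        ∀ s t : ℝ,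
          (∑ i ∈ Finset.range (l + 1),
              (1 / (Nat.factorial i : ℝ)) * K i (γ s) (fun _ => deriv γ s)) =
          (∑ i ∈ Finset.range (l + 1),
              (1 / (Nat.factorial i : ℝ)) * K i (γ t) (fun _ => deriv γ t)))
    ↔
    (∀ i ∈ Finset.range (l + 1), ∀ p v : E,
        ((i : ℝ) + 1) * fderiv ℝ (fun q => K i q (fun _ => v)) p v =
        -(((i : ℝ) + 1)) * K (i + 1) p (Fin.cons (F v) (fun _ => v))) := by
  classical
  -- the derivative of the candidate first integral along a magnetic geodesic
  have hD : ∀ γ : ℝ → E, Differentiable ℝ γ →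
      (∀ t : ℝ, HasDerivAt (deriv γ) (F (deriv γ t)) t) → ∀ t : ℝ,
      HasDerivAt (fun s => ∑ k ∈ Finset.range (l + 1),
          (1 / (Nat.factorial k : ℝ)) * K k (γ s) (fun _ => deriv γ s))
        (∑ k ∈ Finset.range (l + 1), (1 / (Nat.factorial k : ℝ)) *
          (fderiv ℝ (fun q => K k q fun _ => deriv γ t) (γ t) (deriv γ t)
            + ∑ j : Fin k, K k (γ t)
                (Function.update (fun _ => deriv γ t) j (F (deriv γ t))))) t := by
    intro γ hγd hode t
    apply HasDerivAt.fun_sum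
    intro k _
    exact (hasDerivAt_diag (K k) (hKsmooth k) (hγd t).hasDerivAt (hode t)).const_mul _
  -- B-relations
  have hB0 : ∀ p v : E, (∑ j : Fin 0, K 0 p (Function.update (fun _ => v) j (F v))) = 0 := by
    simp
  have hBs : ∀ (m : ℕ) (p v : E),
      (∑ j : Fin (m + 1), K (m + 1) p (Function.update (fun _ => v) j (F v)))
        = ((m : ℝ) + 1) * K (m + 1) p (Fin.cons (F v) fun _ => v) := by
    intro m p v
    have h := Finset.sum_congr rfl fun (j : Fin (m + 1)) (_ : j ∈ Finset.univ) =>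
      update_eq_cons (K (m + 1) p) (hKsym (m + 1) p) v (F v) j
    rw [h, Finset.sum_const, Finset.card_univ, Fintype.card_fin]
    push_cast
    ring
  have hbl : ∀ p v : E, K (l + 1) p (Fin.cons (F v) fun _ => v) = 0 := by
    intro p v; rw [htop p]; rfl
  constructor
  · -- forward direction
    intro h i hi p v
    have key : ∀ w : E,
        (∑ k ∈ Finset.range (l + 1), (1 / (Nat.factorial k : ℝ)) *
          (fderiv ℝ (fun q => K k q fun _ => w) p w
            + ∑ j : Fin k, K k p (Function.update (fun _ => w) j (F w)))) = 0 := by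
      intro w
      obtain ⟨γ, hγd, hode, hγ0, hγ'0⟩ := exists_magnetic_geodesic F p w
      have hDγ := hD γ hγd hode 0
      have hconstf : (fun s => ∑ k ∈ Finset.range (l + 1),
          (1 / (Nat.factorial k : ℝ)) * K k (γ s) (fun _ => deriv γ s))
          = fun _ : ℝ => ∑ k ∈ Finset.range (l + 1),
          (1 / (Nat.factorial k : ℝ)) * K k (γ 0) (fun _ => deriv γ 0) :=
        funext fun s => h γ hγd hode s 0
      have h0 : HasDerivAt (fun s => ∑ k ∈ Finset.range (l + 1),
          (1 / (Nat.factorial k : ℝ)) * K k (γ s) (fun _ => deriv γ s)) 0 0 := by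
        rw [hconstf]; exact hasDerivAt_const 0 _
      have huniq := hDγ.unique h0
      rw [hγ0, hγ'0] at huniq
      exact huniq
    -- scaling
    have e1 : ∀ (k : ℕ) (x : ℝ),
        fderiv ℝ (fun q => K k q fun _ => x • v) p (x • v)
          = x ^ (k + 1) * fderiv ℝ (fun q => K k q fun _ => v) p v := by
      intro k x
      have hfun : (fun q => (K k q) fun _ : Fin k => x • v)
          = fun q => x ^ k • ((K k q) fun _ : Fin k => v) := by
        funext q
        have hh : (fun _ : Fin k => x • v) = fun j : Fin k => x • ((fun _ : Fin k => v) j) :=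
          rfl
        rw [hh, MultilinearMap.map_smul_univ]
        simp
      rw [hfun, fderiv_fun_const_smul (partial_diffAt (K k) (hKsmooth k) p v)]
      simp only [ContinuousLinearMap.coe_smul', Pi.smul_apply, map_smul, smul_eq_mul]
      ring
    have e2 : ∀ (k : ℕ) (x : ℝ) (j : Fin k),
        K k p (Function.update (fun _ => x • v) j (F (x • v)))
          = x ^ k * K k p (Function.update (fun _ => v) j (F v)) := by
      intro k x j
      have hh : Function.update (fun _ : Fin k => x • v) j (F (x • v))
          = fun s => x • (Function.update (fun _ : Fin k => v) j (F v) s) := by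
        funext s
        rcases eq_or_ne s j with rfl | hs
        · simp [map_smul]
        · simp [Function.update_of_ne hs]
      rw [hh, MultilinearMap.map_smul_univ]
      simp
    have hx : ∀ x : ℝ, ∑ k ∈ Finset.range (l + 1),
        ((1 / (Nat.factorial k : ℝ)) *
          (fderiv ℝ (fun q => K k q fun _ => v) p v
            + K (k + 1) p (Fin.cons (F v) fun _ => v))) * x ^ (k + 1) = 0 := by
      intro x
      have hk := key (x • v)
      have hk2 : ∑ k ∈ Finset.range (l + 1), (1 / (Nat.factorial k : ℝ)) *
          (x ^ (k + 1) * fderiv ℝ (fun q => K k q fun _ => v) p v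
            + x ^ k * ∑ j : Fin k, K k p (Function.update (fun _ => v) j (F v))) = 0 := by
        rw [← hk]
        refine Finset.sum_congr rfl fun k _ => ?_
        rw [e1 k x, Finset.sum_congr rfl fun j _ => e2 k x j, ← Finset.mul_sum]
      rw [← hk2]
      exact (algebra_poly l _ _ _ x (hB0 p v) (fun m => hBs m p v) (hbl p v)).symm
    have hc := coeff_zero_of_sum_eq_zero (l + 1) _ hx i hi
    have hfac : (1 / (Nat.factorial i : ℝ)) ≠ 0 := by positivity
    have hsum : fderiv ℝ (fun q => K i q fun _ => v) p v
        + K (i + 1) p (Fin.cons (F v) fun _ => v) = 0 := by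
      rcases mul_eq_zero.1 hc with h' | h'
      · exact absurd h' hfac
      · exact h'
    nlinarith [hsum]
  · -- backward direction
    intro h γ hγd hode s t
    have hzero : ∀ u : ℝ, (∑ k ∈ Finset.range (l + 1), (1 / (Nat.factorial k : ℝ)) *
        (fderiv ℝ (fun q => K k q fun _ => deriv γ u) (γ u) (deriv γ u)
          + ∑ j : Fin k, K k (γ u)
              (Function.update (fun _ => deriv γ u) j (F (deriv γ u))))) = 0 := by
      intro u
      refine algebra_zero l _ _ _ (hB0 (γ u) (deriv γ u)) (fun m => hBs m (γ u) (deriv γ u))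
        (hbl (γ u) (deriv γ u)) ?_
      intro k hk
      have hk' := h k hk (γ u) (deriv γ u)
      have hne : ((k : ℝ) + 1) ≠ 0 := by positivity
      have : ((k : ℝ) + 1) * fderiv ℝ (fun q => K k q fun _ => deriv γ u) (γ u) (deriv γ u)
          = ((k : ℝ) + 1) * (-(K (k + 1) (γ u)
              (Fin.cons (F (deriv γ u)) fun _ => deriv γ u))) := by
        rw [hk']; ring
      exact mul_left_cancel₀ hne this
    have hdiff : Differentiable ℝ (fun s => ∑ k ∈ Finset.range (l + 1),
        (1 / (Nat.factorial k : ℝ)) * K k (γ s) (fun _ => deriv γ s)) :=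
      fun u => (hD γ hγd hode u).differentiableAt
    have hderiv0 : ∀ u : ℝ, deriv (fun s => ∑ k ∈ Finset.range (l + 1),
        (1 / (Nat.factorial k : ℝ)) * K k (γ s) (fun _ => deriv γ s)) u = 0 := by
      intro u
      rw [(hD γ hγd hode u).deriv]
      exact hzero u
    exact is_const_of_deriv_eq_zero hdiff hderiv0 s t
end

section
/- Let (M,g) be a Riemannian manifold, F a Lorentz force with closed associated 2-form ω^F(X,Y) = g(FX,Y), ξ a Killing vector field, and f: M → ℝ a function with df = g(F ξ, ·). Then the function Ψ: TM → ℝ given by Ψ(v) = g(ξ, v) + f(π(v)) is a first integral of the magnetic flow, i.e., Ψ(γ') is constant for every curve γ with ∇_{γ'}γ' = F(γ'). -/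
open RealInnerProductSpace

/-- if `ξ` is a Killing vector field and `f` satisfies `df = g(Fξ, ·)`,
then `Ψ(v) = g(ξ, v) + f(π(v))` is a first integral of the magnetic flow:
`Ψ(γ')` is constant along every magnetic geodesic `γ` (i.e. `∇_{γ'}γ' = F(γ')`).

Formalized in the flat model: the Killing equation reads `⟨(Dξ)_p X, X⟩ = 0`,
the magnetic equation reads `(γ')' = F(γ')`, and the 2-form `ω^F(X,Y) = ⟨FX,Y⟩`
is closed since `F` is constant. -/
theorem magnetic_killing_field_first_integral
    {E : Type*} [NormedAddCommGroup E] [InnerProductSpace ℝ E]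
    (F : E →ₗ[ℝ] E) (hF : ∀ x y : E, ⟪F x, y⟫ = -⟪x, F y⟫)
    (ξ : E → E) (hξ : Differentiable ℝ ξ)
    (hKilling : ∀ (p : E) (X : E), ⟪fderiv ℝ ξ p X, X⟫ = 0)
    (f : E → ℝ) (hf : Differentiable ℝ f)
    (hdf : ∀ (p : E) (y : E), fderiv ℝ f p y = ⟪F (ξ p), y⟫)
    (γ : ℝ → E) (hγ : Differentiable ℝ γ)
    (hmag : ∀ t : ℝ, HasDerivAt (deriv γ) (F (deriv γ t)) t) :
    ∀ s t : ℝ,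
      ⟪ξ (γ s), deriv γ s⟫ + f (γ s) = ⟪ξ (γ t), deriv γ t⟫ + f (γ t) := by
  have key : ∀ t : ℝ, HasDerivAt (fun t => ⟪ξ (γ t), deriv γ t⟫ + f (γ t)) 0 t := by
    intro t
    have hγt : HasDerivAt γ (deriv γ t) t := (hγ t).hasDerivAt
    have hξγ : HasDerivAt (fun t => ξ (γ t)) (fderiv ℝ ξ (γ t) (deriv γ t)) t :=
      (hξ (γ t)).hasFDerivAt.comp_hasDerivAt t hγt
    have hinner := hξγ.inner ℝ (hmag t)
    have hfγ : HasDerivAt (fun t => f (γ t)) (⟪F (ξ (γ t)), deriv γ t⟫) t := by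
      have := (hf (γ t)).hasFDerivAt.comp_hasDerivAt t hγt
      rwa [hdf] at this
    have := hinner.add hfγ
    have heq : ⟪ξ (γ t), F (deriv γ t)⟫ + ⟪fderiv ℝ ξ (γ t) (deriv γ t), deriv γ t⟫
        + ⟪F (ξ (γ t)), deriv γ t⟫ = 0 := by
      rw [hKilling, hF]; ring
    rwa [heq] at this
  have hconst : ∀ s t : ℝ, (fun t => ⟪ξ (γ t), deriv γ t⟫ + f (γ t)) s
      = (fun t => ⟪ξ (γ t), deriv γ t⟫ + f (γ t)) t := by
    intro s t
    have := is_const_of_deriv_eq_zero (f := fun t => ⟪ξ (γ t), deriv γ t⟫ + f (γ t))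
      (fun x => (key x).differentiableAt) (fun x => (key x).deriv) s t
    exact this
  exact hconst
end

section
/- Let 𝔥_{2n+1} be the Heisenberg Lie algebra with orthonormal basis e_1,…,e_{2n+1} and brackets [e_{2i-1}, e_{2i}] = e_{2n+1}, and let J: 𝔳 → 𝔳 be the map on 𝔳 = span(e_1,…,e_{2n}) defined by J(e_{2i-1}) = e_{2i} and J(e_{2i}) = -e_{2i-1}. Then every skew-symmetric derivation D of 𝔥_{2n+1} restricted to 𝔳 commutes with J: JD = DJ on 𝔳. -/
/-!
On `𝔳` the map `J` is `j(z)` for the central vector `z = e_{2n}`: `⟪J U, W⟫ = ⟪z, [U, W]⟫`.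
A skew-symmetric derivation `D` maps `z = [e_0, e_1]` into `ℝ z`, while `⟪D z, z⟫ = 0` by
skewness, so `D z = 0`; in particular `D` preserves `𝔳 = z^⊥`. Then for `U ∈ 𝔳`,
`⟪J (D U), W⟫ = ⟪z, D [U, W]⟫ - ⟪z, [U, D W]⟫ = -⟪D z, [U, W]⟫ - ⟪J U, D W⟫ = ⟪D (J U), W⟫`.
-/

open RealInnerProductSpace

/-- The bracket of the Heisenberg Lie algebra `𝔥_{2n+1}` on `ℝ^{2n+1}` with orthonormal
basis `e_0,…,e_{2n}` (0-indexed) and nonzero brackets `[e_{2i}, e_{2i+1}] = e_{2n}`. -/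
noncomputable def heisBracket (n : ℕ)
    (X Y : EuclideanSpace ℝ (Fin (2 * n + 1))) : EuclideanSpace ℝ (Fin (2 * n + 1)) :=
  (∑ i : Fin n,
      (X ⟨2 * i, by have := i.isLt; omega⟩ * Y ⟨2 * i + 1, by have := i.isLt; omega⟩ -
       X ⟨2 * i + 1, by have := i.isLt; omega⟩ * Y ⟨2 * i, by have := i.isLt; omega⟩)) •
    EuclideanSpace.single ⟨2 * n, by omega⟩ 1

theorem Fin.sum_univ_two_mul_add_one {M : Type*} [AddCommMonoid M] :
    ∀ (n : ℕ) (f : Fin (2 * n + 1) → M), ∑ k, f k =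
      ∑ i : Fin n, (f ⟨2 * i, by omega⟩ + f ⟨2 * i + 1, by omega⟩) + f ⟨2 * n, by omega⟩
  | 0, f => by simp
  | n + 1, f => by
    have h := Fin.sum_univ_castSucc (n := 2 * n + 1) (fun k => f k.castSucc)
    rw [Fin.sum_univ_castSucc (f := f)]
    -- `Fin (2 * (n + 1))` and `Fin (2 * n + 1 + 1)` agree only up to unfolding
    erw [h]
    rw [Fin.sum_univ_two_mul_add_one n, Fin.sum_univ_castSucc]
    simp only [add_assoc]
    rfl

section SkewDerivation

variable {E : Type*} [NormedAddCommGroup E] [InnerProductSpace ℝ E] {D : E →ₗ[ℝ] E}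

theorem apply_eq_zero_of_skew_of_apply_mem_span (hskew : ∀ X Y, ⟪D X, Y⟫ = -⟪X, D Y⟫)
    {z : E} (hz : D z ∈ ℝ ∙ z) : D z = 0 := by
  obtain ⟨c, h⟩ := Submodule.mem_span_singleton.mp hz
  have hzz : ⟪D z, z⟫ = 0 := by linarith [hskew z z, real_inner_comm (D z) z]
  rw [← h, real_inner_smul_left, mul_eq_zero, inner_self_eq_zero] at hzz
  rcases hzz with hc | hz
  · rw [← h, hc, zero_smul]
  · rw [hz, map_zero]

theorem comm_of_skew_derivation_of_inner_eq_inner_bracket (bracket : E → E → E) (j : E → E)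
    (hder : ∀ X Y, D (bracket X Y) = bracket (D X) Y + bracket X (D Y))
    (hskew : ∀ X Y, ⟪D X, Y⟫ = -⟪X, D Y⟫) {z : E} (hz : D z = 0) {U : E}
    (hU : ∀ W, ⟪j U, W⟫ = ⟪z, bracket U W⟫) (hDU : ∀ W, ⟪j (D U), W⟫ = ⟪z, bracket (D U) W⟫) :
    j (D U) = D (j U) := by
  refine ext_inner_right ℝ fun W => ?_
  have hbracket : bracket (D U) W = D (bracket U W) - bracket U (D W) := by
    rw [hder, add_sub_cancel_right]
  calc ⟪j (D U), W⟫ = ⟪z, D (bracket U W)⟫ - ⟪z, bracket U (D W)⟫ := by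
        rw [hDU, hbracket, inner_sub_right]
    _ = -⟪D z, bracket U W⟫ - ⟪j U, D W⟫ := by rw [hskew z, neg_neg, hU]
    _ = ⟪D (j U), W⟫ := by rw [hz, inner_zero_left, hskew, neg_zero, zero_sub]

end SkewDerivation

section Heisenberg

variable {n : ℕ}

noncomputable def heisCenter (n : ℕ) : EuclideanSpace ℝ (Fin (2 * n + 1)) :=
  EuclideanSpace.single ⟨2 * n, by omega⟩ 1

theorem inner_heisCenter_left (X : EuclideanSpace ℝ (Fin (2 * n + 1))) :
    ⟪heisCenter n, X⟫ = X ⟨2 * n, by omega⟩ := by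
  simp [heisCenter, EuclideanSpace.inner_single_left]

theorem inner_heisCenter_heisBracket (X Y : EuclideanSpace ℝ (Fin (2 * n + 1))) :
    ⟪heisCenter n, heisBracket n X Y⟫ =
      ∑ i : Fin n, (X ⟨2 * i, by omega⟩ * Y ⟨2 * i + 1, by omega⟩ -
        X ⟨2 * i + 1, by omega⟩ * Y ⟨2 * i, by omega⟩) := by
  simp [heisBracket, heisCenter, real_inner_smul_right]

theorem heisBracket_mem_span_heisCenter (X Y : EuclideanSpace ℝ (Fin (2 * n + 1))) :
    heisBracket n X Y ∈ ℝ ∙ heisCenter n :=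
  Submodule.smul_mem _ _ (Submodule.mem_span_singleton_self _)

theorem heisBracket_single_single (i : Fin n) :
    heisBracket n (EuclideanSpace.single ⟨2 * i, by omega⟩ 1)
      (EuclideanSpace.single ⟨2 * i + 1, by omega⟩ 1) = heisCenter n := by
  simp [heisBracket, heisCenter, Fin.val_inj, Finset.sum_ite_eq',
    show ∀ a b : ℕ, 2 * a + 1 ≠ 2 * b by omega]

theorem apply_heisCenter_eq_zero (hn : 0 < n)
    {D : EuclideanSpace ℝ (Fin (2 * n + 1)) →ₗ[ℝ] EuclideanSpace ℝ (Fin (2 * n + 1))}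
    (hder : ∀ X Y, D (heisBracket n X Y) = heisBracket n (D X) Y + heisBracket n X (D Y))
    (hskew : ∀ X Y, ⟪D X, Y⟫ = -⟪X, D Y⟫) : D (heisCenter n) = 0 := by
  refine apply_eq_zero_of_skew_of_apply_mem_span hskew ?_
  have h := congrArg D (heisBracket_single_single ⟨0, hn⟩)
  rw [hder] at h
  rw [← h]
  exact add_mem (heisBracket_mem_span_heisCenter _ _) (heisBracket_mem_span_heisCenter _ _)

theorem inner_apply_eq_inner_heisCenter_heisBracket
    {J : EuclideanSpace ℝ (Fin (2 * n + 1)) →ₗ[ℝ] EuclideanSpace ℝ (Fin (2 * n + 1))}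
    (hJ1 : ∀ i : Fin n, J (EuclideanSpace.single ⟨2 * i, by omega⟩ 1) =
      EuclideanSpace.single ⟨2 * i + 1, by omega⟩ 1)
    (hJ2 : ∀ i : Fin n, J (EuclideanSpace.single ⟨2 * i + 1, by omega⟩ 1) =
      -EuclideanSpace.single ⟨2 * i, by omega⟩ 1)
    {U : EuclideanSpace ℝ (Fin (2 * n + 1))} (hU : U ⟨2 * n, by omega⟩ = 0)
    (W : EuclideanSpace ℝ (Fin (2 * n + 1))) :
    ⟪J U, W⟫ = ⟪heisCenter n, heisBracket n U W⟫ := by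
  conv_lhs => rw [← (EuclideanSpace.basisFun _ ℝ).sum_repr U]
  simp only [map_sum, map_smul, sum_inner, real_inner_smul_left, EuclideanSpace.basisFun_apply,
    EuclideanSpace.basisFun_repr]
  rw [Fin.sum_univ_two_mul_add_one, inner_heisCenter_heisBracket]
  simp only [hJ1, hJ2, hU, zero_mul, add_zero, inner_neg_left, EuclideanSpace.inner_single_left,
    map_one, one_mul]
  exact Finset.sum_congr rfl fun i _ => by ring

end Heisenberg

/-- every skew-symmetric derivation `D` of `𝔥_{2n+1}` commutes with the
complex structure `J` (defined on `𝔳 = {X | X_{2n} = 0}` by `J e_{2i} = e_{2i+1}`,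
`J e_{2i+1} = -e_{2i}`) on the subspace `𝔳`. -/
theorem heisenberg_skew_derivation_commutes_J (n : ℕ) (hn : 0 < n)
    (D J : EuclideanSpace ℝ (Fin (2 * n + 1)) →ₗ[ℝ] EuclideanSpace ℝ (Fin (2 * n + 1)))
    (hder : ∀ X Y, D (heisBracket n X Y) =
      heisBracket n (D X) Y + heisBracket n X (D Y))
    (hskew : ∀ X Y, ⟪D X, Y⟫ = -⟪X, D Y⟫)
    (hJ1 : ∀ i : Fin n,
      J (EuclideanSpace.single ⟨2 * i, by have := i.isLt; omega⟩ 1) =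
        EuclideanSpace.single ⟨2 * i + 1, by have := i.isLt; omega⟩ 1)
    (hJ2 : ∀ i : Fin n,
      J (EuclideanSpace.single ⟨2 * i + 1, by have := i.isLt; omega⟩ 1) =
        -EuclideanSpace.single ⟨2 * i, by have := i.isLt; omega⟩ 1) :
    ∀ X : EuclideanSpace ℝ (Fin (2 * n + 1)),
      X ⟨2 * n, by omega⟩ = 0 → J (D X) = D (J X) := by
  intro X hX
  have hz : D (heisCenter n) = 0 := apply_heisCenter_eq_zero hn hder hskew
  have hDX : D X ⟨2 * n, by omega⟩ = 0 := by
    rw [← inner_heisCenter_left, real_inner_comm, hskew, hz, inner_zero_right, neg_zero]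
  exact comm_of_skew_derivation_of_inner_eq_inner_bracket (heisBracket n) J hder hskew hz
    (inner_apply_eq_inner_heisCenter_heisBracket hJ1 hJ2 hX)
    (inner_apply_eq_inner_heisCenter_heisBracket hJ1 hJ2 hDX)
end

section
/- Let V be a 2n-dimensional real inner product space and J, F skew-symmetric endomorphisms of V with J² = -Id and JF = FJ. Then there exists an orthonormal basis v_1,…,v_{2n} of V and real numbers η_1,…,η_n such that J v_{2i-1} = v_{2i}, J v_{2i} = -v_{2i-1}, F v_{2i-1} = η_i v_{2i}, and F v_{2i} = -η_i v_{2i-1} for i = 1,…,n. -/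
/-!
As `J` and `F` are skew and commute, `J ∘ F` is symmetric, and a unit eigenvector `u` of it
satisfies `F u = η • J u` (with `η` minus the eigenvalue, because `F = -J (J F)`). The plane
spanned by the orthonormal pair `u, J u` is invariant under `J` and `F`, hence so is its
orthogonal complement, both maps being skew; induction on the dimension then gives vectors
`u₁, …, uₙ` that are orthonormal with `⟪uᵢ, J uⱼ⟫ = 0`, which is exactly what makes
`u₁, J u₁, …, uₙ, J uₙ` an orthonormal basis.
-/

open RealInnerProductSpace Module

section Skew

variable {V : Type*} [NormedAddCommGroup V] [InnerProductSpace ℝ V] {T : V →ₗ[ℝ] V}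

theorem inner_self_map_eq_zero_of_skew (hT : ∀ x y : V, ⟪T x, y⟫ = -⟪x, T y⟫) (x : V) :
    ⟪x, T x⟫ = 0 := by
  linarith [hT x x, real_inner_comm x (T x)]

theorem inner_map_map_of_skew_of_sq (hT : ∀ x y : V, ⟪T x, y⟫ = -⟪x, T y⟫)
    (hT2 : ∀ x, T (T x) = -x) (x y : V) : ⟪T x, T y⟫ = ⟪x, y⟫ := by
  rw [hT, hT2, inner_neg_right, neg_neg]

theorem norm_map_of_skew_of_sq (hT : ∀ x y : V, ⟪T x, y⟫ = -⟪x, T y⟫)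
    (hT2 : ∀ x, T (T x) = -x) (x : V) : ‖T x‖ = ‖x‖ :=
  (T.isometryOfInner (inner_map_map_of_skew_of_sq hT hT2)).norm_map x

theorem map_mem_orthogonal_of_skew (hT : ∀ x y : V, ⟪T x, y⟫ = -⟪x, T y⟫)
    {W : Submodule ℝ V} (hW : W ≤ W.comap T) {x : V} (hx : x ∈ Wᗮ) : T x ∈ Wᗮ := by
  rw [Submodule.mem_orthogonal]
  intro w hw
  linarith [hT w x, real_inner_comm x (T w),
    Submodule.inner_left_of_mem_orthogonal (Submodule.mem_comap.1 (hW hw)) hx]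

theorem orthonormal_pairs_of_skew_of_sq (hT : ∀ x y : V, ⟪T x, y⟫ = -⟪x, T y⟫)
    (hT2 : ∀ x, T (T x) = -x) {ι : Type*} {u : ι → V} (hu : Orthonormal ℝ u)
    (huT : ∀ i j, ⟪u i, T (u j)⟫ = 0) :
    Orthonormal ℝ fun p : ι × Fin 2 => ![u p.1, T (u p.1)] p.2 := by
  classical
  rw [orthonormal_iff_ite] at hu ⊢
  rintro ⟨i, a⟩ ⟨j, b⟩
  fin_cases a <;> fin_cases b <;>
    simp [hu, huT, hT (u i) (u j), inner_map_map_of_skew_of_sq hT hT2]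

end Skew

theorem OrthonormalBasis.exists_of_orthonormal_fin_two {𝕜 V : Type*} [RCLike 𝕜]
    [NormedAddCommGroup V] [InnerProductSpace 𝕜 V] [FiniteDimensional 𝕜 V] {n : ℕ}
    (hdim : finrank 𝕜 V = 2 * n) {v : Fin n × Fin 2 → V} (hv : Orthonormal 𝕜 v) :
    ∃ b : OrthonormalBasis (Fin (2 * n)) 𝕜 V, ∀ i : Fin n,
      b ⟨2 * i, by omega⟩ = v (i, 0) ∧ b ⟨2 * i + 1, by omega⟩ = v (i, 1) := by
  let e : Fin n × Fin 2 ≃ Fin (2 * n) := finProdFinEquiv.trans (finCongr (Nat.mul_comm n 2))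
  have hspan := hv.linearIndependent.span_eq_top_of_card_eq_finrank' (by simp [hdim, mul_comm])
  refine ⟨(OrthonormalBasis.mk hv hspan.ge).reindex e, fun i => ⟨?_, ?_⟩⟩
  · rw [show (⟨2 * i, _⟩ : Fin (2 * n)) = e (i, 0) from Fin.ext (by simp [e, mul_comm])]
    simp
  · rw [show (⟨2 * i + 1, _⟩ : Fin (2 * n)) = e (i, 1) from Fin.ext (by simp [e]; ring)]
    simp

section CommutingSkewPair

variable {V : Type*} [NormedAddCommGroup V] [InnerProductSpace ℝ V]

structure IsCommutingSkewPair (J F : V →ₗ[ℝ] V) : Prop where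
  skew_J : ∀ x y : V, ⟪J x, y⟫ = -⟪x, J y⟫
  skew_F : ∀ x y : V, ⟪F x, y⟫ = -⟪x, F y⟫
  J_sq : ∀ x : V, J (J x) = -x
  comm : ∀ x : V, J (F x) = F (J x)

namespace IsCommutingSkewPair

variable {J F : V →ₗ[ℝ] V}

theorem restrict (h : IsCommutingSkewPair J F) {K : Submodule ℝ V} (hJ : ∀ x ∈ K, J x ∈ K)
    (hF : ∀ x ∈ K, F x ∈ K) : IsCommutingSkewPair (J.restrict hJ) (F.restrict hF) where
  skew_J x y := h.skew_J x y
  skew_F x y := h.skew_F x y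
  J_sq x := Subtype.ext (h.J_sq x)
  comm x := Subtype.ext (h.comm x)

theorem isSymmetric_comp (h : IsCommutingSkewPair J F) : (J ∘ₗ F).IsSymmetric := fun x y => by
  rw [LinearMap.comp_apply, LinearMap.comp_apply, h.skew_J, h.skew_F, neg_neg, h.comm]

theorem exists_unit_apply_eq_smul [FiniteDimensional ℝ V] (h : IsCommutingSkewPair J F)
    (hpos : 0 < finrank ℝ V) : ∃ u : V, ‖u‖ = 1 ∧ ∃ η : ℝ, F u = η • J u := by
  let i : Fin (finrank ℝ V) := ⟨0, hpos⟩
  have hG := h.isSymmetric_comp.apply_eigenvectorBasis rfl i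
  refine ⟨_, (h.isSymmetric_comp.eigenvectorBasis rfl).orthonormal.norm_eq_one i,
    -h.isSymmetric_comp.eigenvalues rfl i, ?_⟩
  rw [LinearMap.comp_apply, RCLike.ofReal_real_eq_id, id] at hG
  rw [← neg_neg (F _), ← h.J_sq (F _), hG, map_smul, neg_smul]

theorem apply_mem_orthogonal_span_pair (h : IsCommutingSkewPair J F) {u : V} {η : ℝ}
    (hu : F u = η • J u) {x : V} (hx : x ∈ (Submodule.span ℝ (Set.range ![u, J u]))ᗮ) :
    J x ∈ (Submodule.span ℝ (Set.range ![u, J u]))ᗮ ∧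
      F x ∈ (Submodule.span ℝ (Set.range ![u, J u]))ᗮ := by
  have mem : ∀ i, ![u, J u] i ∈ Submodule.span ℝ (Set.range ![u, J u]) :=
    fun i => Submodule.subset_span ⟨i, rfl⟩
  refine ⟨map_mem_orthogonal_of_skew h.skew_J ?_ hx, map_mem_orthogonal_of_skew h.skew_F ?_ hx⟩
  all_goals
    rw [Submodule.span_le, Set.range_subset_iff, Fin.forall_fin_two]
    simp only [Matrix.cons_val_zero, Matrix.cons_val_one, SetLike.mem_coe, Submodule.mem_comap]
  · exact ⟨mem 1, by simpa [h.J_sq] using neg_mem (mem 0)⟩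
  · refine ⟨by simpa [hu] using Submodule.smul_mem _ η (mem 1), ?_⟩
    simpa [← h.comm, hu, h.J_sq] using Submodule.smul_mem _ (-η) (mem 0)

theorem exists_orthonormal_eigenfamily [FiniteDimensional ℝ V] (h : IsCommutingSkewPair J F)
    {n : ℕ} (hdim : finrank ℝ V = 2 * n) :
    ∃ (u : Fin n → V) (η : Fin n → ℝ), Orthonormal ℝ u ∧ (∀ i j, ⟪u i, J (u j)⟫ = 0) ∧
      ∀ i, F (u i) = η i • J (u i) := by
  induction n generalizing V with
  | zero => exact ⟨Fin.elim0, Fin.elim0, .of_isEmpty _, fun i => i.elim0, fun i => i.elim0⟩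
  | succ n ih =>
    obtain ⟨u₀, hu₀, η₀, hFu₀⟩ := h.exists_unit_apply_eq_smul (by omega)
    set W := Submodule.span ℝ (Set.range ![u₀, J u₀])
    have mem : ∀ i, ![u₀, J u₀] i ∈ W := fun i => Submodule.subset_span ⟨i, rfl⟩
    have hJW (x) (hx : x ∈ Wᗮ) := (h.apply_mem_orthogonal_span_pair hFu₀ hx).1
    have hFW (x) (hx : x ∈ Wᗮ) := (h.apply_mem_orthogonal_span_pair hFu₀ hx).2
    have hW : finrank ℝ W = 2 := by
      have hpair : Orthonormal ℝ ![u₀, J u₀] := by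
        simp [hu₀, norm_map_of_skew_of_sq h.skew_J h.J_sq,
          inner_self_map_eq_zero_of_skew h.skew_J]
      simpa using finrank_span_eq_card hpair.linearIndependent
    obtain ⟨u, η, hu, huJ, hFu⟩ := ih (h.restrict hJW hFW)
      (by linarith [W.finrank_add_finrank_orthogonal])
    refine ⟨Matrix.vecCons u₀ (fun i => (u i : V)), Matrix.vecCons η₀ η, ?_, ?_, ?_⟩
    · exact orthonormal_vecCons_iff.2 ⟨hu₀,
        fun i => W.inner_right_of_mem_orthogonal (mem 0) (u i).2,
        hu.comp_linearIsometry Wᗮ.subtypeₗᵢ⟩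
    · intro i j
      cases i using Fin.cases <;> cases j using Fin.cases <;>
        simp only [Matrix.cons_val_zero, Matrix.cons_val_succ]
      · exact inner_self_map_eq_zero_of_skew h.skew_J u₀
      · exact W.inner_right_of_mem_orthogonal (mem 0) (hJW _ (u _).2)
      · exact W.inner_left_of_mem_orthogonal (mem 1) (u _).2
      · exact huJ _ _
    · intro i
      cases i using Fin.cases
      · exact hFu₀
      · exact congrArg Subtype.val (hFu _)

end IsCommutingSkewPair

end CommutingSkewPair

/-- if `J, F` are commuting skew-symmetric endomorphisms of a
`2n`-dimensional real inner product space with `J² = -Id`, then there is an orthonormal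
basis `v₁,…,v_{2n}` and reals `η₁,…,η_n` with `J v_{2i-1} = v_{2i}`, `J v_{2i} = -v_{2i-1}`,
`F v_{2i-1} = η_i v_{2i}`, `F v_{2i} = -η_i v_{2i-1}`. -/
theorem commuting_skew_normal_form
    {V : Type*} [NormedAddCommGroup V] [InnerProductSpace ℝ V] [FiniteDimensional ℝ V]
    (n : ℕ) (hdim : finrank ℝ V = 2 * n)
    (J F : V →ₗ[ℝ] V)
    (hJskew : ∀ x y : V, ⟪J x, y⟫ = -⟪x, J y⟫)
    (hFskew : ∀ x y : V, ⟪F x, y⟫ = -⟪x, F y⟫)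
    (hJ2 : ∀ x : V, J (J x) = -x)
    (hJF : ∀ x : V, J (F x) = F (J x)) :
    ∃ (b : OrthonormalBasis (Fin (2 * n)) ℝ V) (η : Fin n → ℝ),
      ∀ i : Fin n,
        J (b ⟨2 * i, by have := i.isLt; omega⟩) = b ⟨2 * i + 1, by have := i.isLt; omega⟩ ∧
        J (b ⟨2 * i + 1, by have := i.isLt; omega⟩) = -b ⟨2 * i, by have := i.isLt; omega⟩ ∧
        F (b ⟨2 * i, by have := i.isLt; omega⟩) =
          η i • b ⟨2 * i + 1, by have := i.isLt; omega⟩ ∧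
        F (b ⟨2 * i + 1, by have := i.isLt; omega⟩) =
          -(η i) • b ⟨2 * i, by have := i.isLt; omega⟩ := by
  obtain ⟨u, η, hu, huJ, hFu⟩ :=
    IsCommutingSkewPair.exists_orthonormal_eigenfamily ⟨hJskew, hFskew, hJ2, hJF⟩ hdim
  obtain ⟨b, hb⟩ := OrthonormalBasis.exists_of_orthonormal_fin_two hdim
    (orthonormal_pairs_of_skew_of_sq hJskew hJ2 hu huJ)
  refine ⟨b, η, fun i => ?_⟩
  obtain ⟨hb₀, hb₁⟩ := hb i
  simp only [Matrix.cons_val_zero, Matrix.cons_val_one] at hb₀ hb₁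
  rw [hb₀, hb₁]
  refine ⟨rfl, hJ2 _, hFu i, ?_⟩
  rw [← hJF, hFu, map_smul, hJ2, smul_neg, neg_smul]
end
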